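/- Let α be irrational with convergents p_n/q_n and let θ, k_j be as in the paper's construction. If k is an integer with k_j < |k| ≤ k_{j+1}, |k| ≥ 10⁻³ η q_{2j+1}, and k ≠ k_{j+1}, then ‖2θ + kα‖_{ℝ/ℤ} ≥ ‖q_{2j}α‖_{ℝ/ℤ} − ‖2θ + k_{j+1}α‖_{ℝ/ℤ} ≥ 1/(2 q_{2j+1}) − 10η/q_{2j+2} ≥ 1/(4 q_{2j+1}). -/

import Mathlib

/-!
Put `m = k - k_{j+1}`. Then `0 < |m| ≤ 2 k_{j+1} ≤ 4 η q_{2j+1} < q_{2j+1}`, so by the best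
approximation property `‖q_{2j} α‖ ≤ ‖m α‖`, and `‖m α‖ ≤ ‖2θ + k α‖ + ‖2θ + k_{j+1} α‖` by the
triangle inequality on `ℝ/ℤ`. The remaining two inequalities are arithmetic, the last one using
that `q_{2j+2}` is much larger than `q_{2j+1}`.
-/

/-- Distance from a real number to the nearest integer, ‖x‖_{ℝ/ℤ}. -/
noncomputable def normZ (x : ℝ) : ℝ := |x - round x|

/-- The Gauss map. -/
noncomputable def cfGauss (x : ℝ) : ℝ := Int.fract x⁻¹

/-- Partial quotients of α ∈ (0,1): `cfA α n` is the paper's a_{n+1}. -/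
noncomputable def cfA (α : ℝ) (n : ℕ) : ℤ := ⌊(cfGauss^[n] α)⁻¹⌋

/-- Continued fraction denominators: q_0 = 1, q_1 = a_1, q_{n+2} = a_{n+2} q_{n+1} + q_n. -/
noncomputable def cfQ (α : ℝ) : ℕ → ℤ
  | 0 => 1
  | 1 => cfA α 0
  | (n + 2) => cfA α (n + 1) * cfQ α (n + 1) + cfQ α n

/-- Continued fraction numerators: p_0 = 0, p_1 = 1, p_{n+2} = a_{n+2} p_{n+1} + p_n. -/
noncomputable def cfP (α : ℝ) : ℕ → ℤ
  | 0 => 0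
  | 1 => 1
  | (n + 2) => cfA α (n + 1) * cfP α (n + 1) + cfP α n

theorem normZ_eq_norm_coe (x : ℝ) : normZ x = ‖(x : UnitAddCircle)‖ :=
  UnitAddCircle.norm_eq.symm

theorem normZ_sub_le (x y : ℝ) : normZ (x - y) ≤ normZ x + normZ y := by
  simp only [normZ_eq_norm_coe, AddCircle.coe_sub]
  exact norm_sub_le _ _

theorem normZ_intCast_sub_mul_le (θ α : ℝ) (k l : ℤ) :
    normZ (((k - l : ℤ) : ℝ) * α) ≤ normZ (θ + k * α) + normZ (θ + l * α) := by
  have h : ((k - l : ℤ) : ℝ) * α = (θ + k * α) - (θ + l * α) := by push_cast; ring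
  exact h ▸ normZ_sub_le _ _

theorem abs_sub_le_two_mul {k l : ℤ} (hl : 0 < l) (hk : |k| ≤ l) : |k - l| ≤ 2 * l := by
  have := abs_sub k l
  rw [abs_of_pos hl] at this
  omega

theorem one_div_four_mul_le_sub {η q q' : ℝ} (hη : 0 < η) (hη1 : η ≤ 1) (hq : 0 < q)
    (hgap : 10 ^ 17 * q ≤ η * q') :
    1 / (4 * q) ≤ 1 / (2 * q) - 10 * η / q' := by
  have hq' : 0 < q' := by nlinarith
  have hsmall : 10 * η / q' ≤ 1 / (4 * q) := by
    rw [div_le_div_iff₀ hq' (by positivity)]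
    nlinarith
  have hhalf : 1 / (2 * q) - 1 / (4 * q) = 1 / (4 * q) := by field_simp; ring
  linarith

theorem stmt19_general (α θ η : ℝ)
    (hη0 : 0 < η) (hη1 : η ≤ 1 / 100) (j : ℕ) (kj1 : ℤ)
    (hkj1pos : 0 < kj1) (hkj1 : (kj1 : ℝ) ≤ 2 * η * (cfQ α (2 * j + 1) : ℝ))
    (hqlow : 1 / (2 * (cfQ α (2 * j + 1) : ℝ)) ≤ normZ ((cfQ α (2 * j) : ℝ) * α))
    (hgap : 10 ^ 17 * (cfQ α (2 * j + 1) : ℝ) ≤ η * (cfQ α (2 * j + 2) : ℝ))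
    (hθ : normZ (2 * θ + (kj1 : ℝ) * α) ≤ 10 * η / (cfQ α (2 * j + 2) : ℝ))
    (hbest : ∀ m : ℤ, 1 ≤ |m| → |m| < cfQ α (2 * j + 1) →
      normZ ((cfQ α (2 * j) : ℝ) * α) ≤ normZ ((m : ℝ) * α))
    (k : ℤ) (hk2 : |k| ≤ kj1) (hk4 : k ≠ kj1) :
    normZ ((cfQ α (2 * j) : ℝ) * α) - normZ (2 * θ + (kj1 : ℝ) * α)
        ≤ normZ (2 * θ + (k : ℝ) * α)
    ∧ 1 / (2 * (cfQ α (2 * j + 1) : ℝ)) - 10 * η / (cfQ α (2 * j + 2) : ℝ)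
        ≤ normZ ((cfQ α (2 * j) : ℝ) * α) - normZ (2 * θ + (kj1 : ℝ) * α)
    ∧ 1 / (4 * (cfQ α (2 * j + 1) : ℝ))
        ≤ 1 / (2 * (cfQ α (2 * j + 1) : ℝ)) - 10 * η / (cfQ α (2 * j + 2) : ℝ) := by
  have hkj1_one : (1 : ℝ) ≤ kj1 := by exact_mod_cast hkj1pos
  have hq_pos : (0 : ℝ) < cfQ α (2 * j + 1) := by nlinarith
  have hm_le : ((|k - kj1| : ℤ) : ℝ) ≤ 2 * kj1 := by
    exact_mod_cast abs_sub_le_two_mul hkj1pos hk2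
  have hm_lt : |k - kj1| < cfQ α (2 * j + 1) := by
    have : ((|k - kj1| : ℤ) : ℝ) < cfQ α (2 * j + 1) := by nlinarith
    exact_mod_cast this
  have hqm := hbest (k - kj1) (Int.one_le_abs (sub_ne_zero.mpr hk4)) hm_lt
  have htri := normZ_intCast_sub_mul_le (2 * θ) α k kj1
  exact ⟨by linarith, by linarith, one_div_four_mul_le_sub hη0 (by linarith) hq_pos hgap⟩

/-- Case 1 in the computation of δ(α,θ): |k| ≥ 10⁻³ η q_{2j+1}, k ≠ k_{j+1}. -/
theorem stmt19 (α θ η : ℝ) (hα : Irrational α) (h0 : 0 < α) (h1 : α < 1)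
    (hη0 : 0 < η) (hη1 : η ≤ 1 / 100) (j : ℕ) (kj kj1 : ℤ)
    (hkj1pos : 0 < kj1) (hkj1 : (kj1 : ℝ) ≤ 2 * η * (cfQ α (2 * j + 1) : ℝ))
    (hqlow : 1 / (2 * (cfQ α (2 * j + 1) : ℝ)) ≤ normZ ((cfQ α (2 * j) : ℝ) * α))
    (hgap : 10 ^ 17 * (cfQ α (2 * j + 1) : ℝ) ≤ η * (cfQ α (2 * j + 2) : ℝ))
    (hθ : normZ (2 * θ + (kj1 : ℝ) * α) ≤ 10 * η / (cfQ α (2 * j + 2) : ℝ))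
    (hbest : ∀ m : ℤ, 1 ≤ |m| → |m| < cfQ α (2 * j + 1) →
      normZ ((cfQ α (2 * j) : ℝ) * α) ≤ normZ ((m : ℝ) * α))
    (k : ℤ) (hk1 : kj < |k|) (hk2 : |k| ≤ kj1)
    (hk3 : (1 / 10 ^ 3) * η * (cfQ α (2 * j + 1) : ℝ) ≤ (|k| : ℝ)) (hk4 : k ≠ kj1) :
    normZ ((cfQ α (2 * j) : ℝ) * α) - normZ (2 * θ + (kj1 : ℝ) * α)
        ≤ normZ (2 * θ + (k : ℝ) * α)
    ∧ 1 / (2 * (cfQ α (2 * j + 1) : ℝ)) - 10 * η / (cfQ α (2 * j + 2) : ℝ)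
        ≤ normZ ((cfQ α (2 * j) : ℝ) * α) - normZ (2 * θ + (kj1 : ℝ) * α)
    ∧ 1 / (4 * (cfQ α (2 * j + 1) : ℝ))
        ≤ 1 / (2 * (cfQ α (2 * j + 1) : ℝ)) - 10 * η / (cfQ α (2 * j + 2) : ℝ) :=
  stmt19_general α θ η hη0 hη1 j kj1 hkj1pos hkj1 hqlow hgap hθ hbest k hk2 hk4
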